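/- In the unlearning setup, the retain-set part of the one-step second moment satisfies, with expectation over the Bernoulli batch selection, E[ (I − η(1−α)(1/B) Σ_r x_{r,k} H_r^R)ᵀ (I − η(1−α)(1/B) Σ_r x_{r,k} H_r^R) ] = (I − η(1−α) H_R)² + η²(1−α)² (1/n_r)(1/B − 1/n_r) Σ_{r=1}^{n_r} (H_r^R)². -/

import Mathlib

open Matrix Filter Finset Set
open scoped BigOperators

noncomputable section

/-- Frobenius norm of a real square matrix. -/
def frob {n : Type*} [Fintype n] (M : Matrix n n ℝ) : ℝ :=
  Real.sqrt (∑ i, ∑ j, (M i j) ^ 2)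

open Classical in
/-- The positive semidefinite square root of a matrix (junk value `0` on non-PSD input). -/
def psdSqrt {n : Type*} [Fintype n] [DecidableEq n] (A : Matrix n n ℝ) : Matrix n n ℝ :=
  if h : A.PosSemidef then
    (h.1.eigenvectorUnitary : Matrix n n ℝ) *
      diagonal ((↑) ∘ (Real.sqrt ·) ∘ h.1.eigenvalues) *
        (star h.1.eigenvectorUnitary : Matrix n n ℝ)
  else 0

open Classical in
/-- The largest eigenvalue of a symmetric real matrix (junk value `0` otherwise). -/
def lamMax {n : Type*} [Fintype n] [DecidableEq n] (A : Matrix n n ℝ) : ℝ :=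
  if h : A.IsHermitian then ⨆ i, h.eigenvalues i else 0

/-- Probability of observing the Bernoulli(B/n) selection pattern `x`. -/
def selProb (n B : ℕ) (x : Fin n → Bool) : ℝ :=
  ∏ i, if x i then (B : ℝ) / n else 1 - (B : ℝ) / n

/-- Average Hessian of a family. -/
def Hbar {d n : ℕ} (H : Fin n → Matrix (Fin d) (Fin d) ℝ) : Matrix (Fin d) (Fin d) ℝ :=
  (n : ℝ)⁻¹ • ∑ i, H i

/-- Mean update operator `J = I − η(1−α)H_R + ηα H_F`. -/
def Jbar {d nr nf : ℕ} (η α : ℝ) (HR : Fin nr → Matrix (Fin d) (Fin d) ℝ)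
    (HF : Fin nf → Matrix (Fin d) (Fin d) ℝ) : Matrix (Fin d) (Fin d) ℝ :=
  1 - (η * (1 - α)) • Hbar HR + (η * α) • Hbar HF

/-- Random update operator for the batch-selection pattern `x`. -/
def Jop {d nr nf : ℕ} (η α : ℝ) (B : ℕ) (HR : Fin nr → Matrix (Fin d) (Fin d) ℝ)
    (HF : Fin nf → Matrix (Fin d) (Fin d) ℝ)
    (x : (Fin nr → Bool) × (Fin nf → Bool)) : Matrix (Fin d) (Fin d) ℝ :=
  1 - (η * (1 - α) / B) • (∑ r, if x.1 r then HR r else 0)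
    + (η * α / B) • (∑ f, if x.2 f then HF f else 0)

/-- `C_r = η²(1−α)²(1/n_r)(1/B − 1/n_r)`. -/
def Crc (η α : ℝ) (B nr : ℕ) : ℝ :=
  η ^ 2 * (1 - α) ^ 2 * (nr : ℝ)⁻¹ * ((B : ℝ)⁻¹ - (nr : ℝ)⁻¹)

/-- `C_f = η²α²(1/n_f)(1/B − 1/n_f)`. -/
def Cfc (η α : ℝ) (B nf : ℕ) : ℝ :=
  η ^ 2 * α ^ 2 * (nf : ℝ)⁻¹ * ((B : ℝ)⁻¹ - (nf : ℝ)⁻¹)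

/-- Noise-accumulation matrices `N_k`. -/
def Nmat {d nr nf : ℕ} (η α : ℝ) (B : ℕ) (HR : Fin nr → Matrix (Fin d) (Fin d) ℝ)
    (HF : Fin nf → Matrix (Fin d) (Fin d) ℝ) : ℕ → Matrix (Fin d) (Fin d) ℝ
  | 0 => 1
  | k + 1 =>
      Cfc η α B nf • ∑ f, HF f * Nmat η α B HR HF k * HF f
        + Crc η α B nr • ∑ r, HR r * Nmat η α B HR HF k * HR r

/-- `W_k = J_{k−1} ⋯ J_1 J_0` for a finite sequence of batch selections. -/
def Wk {d nr nf : ℕ} (η α : ℝ) (B : ℕ) (HR : Fin nr → Matrix (Fin d) (Fin d) ℝ)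
    (HF : Fin nf → Matrix (Fin d) (Fin d) ℝ) {k : ℕ}
    (s : Fin k → (Fin nr → Bool) × (Fin nf → Bool)) : Matrix (Fin d) (Fin d) ℝ :=
  (List.ofFn fun i => Jop η α B HR HF (s i)).reverse.prod

/-- `E‖w_k‖² = E Tr(W_k W_kᵀ)`, the expectation taken over the i.i.d. Bernoulli
batch selections of the `k` steps. -/
def Ewk2 {d nr nf : ℕ} (η α : ℝ) (B : ℕ) (HR : Fin nr → Matrix (Fin d) (Fin d) ℝ)
    (HF : Fin nf → Matrix (Fin d) (Fin d) ℝ) (k : ℕ) : ℝ :=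
  ∑ s : Fin k → (Fin nr → Bool) × (Fin nf → Bool),
    (∏ i, selProb nr B (s i).1 * selProb nf B (s i).2) *
      (Wk η α B HR HF s * (Wk η α B HR HF s)ᵀ).trace

/-- `E[(e₁ᵀ w_k)²]`, i.e. the `(i0,i0)` entry of `E[W_k W_kᵀ]`. -/
def Ee1 {d nr nf : ℕ} (η α : ℝ) (B : ℕ) (HR : Fin nr → Matrix (Fin d) (Fin d) ℝ)
    (HF : Fin nf → Matrix (Fin d) (Fin d) ℝ) (i0 : Fin d) (k : ℕ) : ℝ :=
  ∑ s : Fin k → (Fin nr → Bool) × (Fin nf → Bool),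
    (∏ i, selProb nr B (s i).1 * selProb nf B (s i).2) *
      ((Wk η α B HR HF s * (Wk η α B HR HF s)ᵀ) i0 i0)

/-- Mixed Hessian `D_{rf} = C'_r H_r^R + C'_f H_f^F` for a retain/forget pair. -/
def Drf {d nr nf : ℕ} (Cr' Cf' : ℝ) (HR : Fin nr → Matrix (Fin d) (Fin d) ℝ)
    (HF : Fin nf → Matrix (Fin d) (Fin d) ℝ) (p : Fin nr × Fin nf) :
    Matrix (Fin d) (Fin d) ℝ :=
  Cr' • HR p.1 + Cf' • HF p.2

/-- Mix-Hessian `D = (1/(n_r n_f)) Σ_{r,f} D_{rf}`. -/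
def Dmix {d nr nf : ℕ} (Cr' Cf' : ℝ) (HR : Fin nr → Matrix (Fin d) (Fin d) ℝ)
    (HF : Fin nf → Matrix (Fin d) (Fin d) ℝ) : Matrix (Fin d) (Fin d) ℝ :=
  ((nr : ℝ) * nf)⁻¹ • ∑ p : Fin nr × Fin nf, Drf Cr' Cf' HR HF p

/-- Mix-coherence matrix `S_{(r,f),(r',f')} = ‖D_{rf}^{1/2} D_{r'f'}^{1/2}‖_F`. -/
def Smat {d nr nf : ℕ} (Cr' Cf' : ℝ) (HR : Fin nr → Matrix (Fin d) (Fin d) ℝ)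
    (HF : Fin nf → Matrix (Fin d) (Fin d) ℝ) :
    Matrix (Fin nr × Fin nf) (Fin nr × Fin nf) ℝ :=
  Matrix.of fun p q =>
    frob (psdSqrt (Drf Cr' Cf' HR HF p) * psdSqrt (Drf Cr' Cf' HR HF q))

/-- Unlearning coherence `σ = λ_max(S) / max_{(r,f)} λ_max(D_{rf})`. -/
def cohSigma {d nr nf : ℕ} (Cr' Cf' : ℝ) (HR : Fin nr → Matrix (Fin d) (Fin d) ℝ)
    (HF : Fin nf → Matrix (Fin d) (Fin d) ℝ) : ℝ :=
  lamMax (Smat Cr' Cf' HR HF) / ⨆ p : Fin nr × Fin nf, lamMax (Drf Cr' Cf' HR HF p)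

/-- Stacked filter-weight vector of the two-layer ReLU CNN signal-plus-noise model. -/
def wvec (d mfil : ℕ) (μ ξi : Fin d → ℝ) (yi : ℝ)
    (ai bi : Bool → Fin mfil → Bool) : (Bool × Fin mfil) × Fin d → ℝ :=
  fun p =>
    ((if p.1.1 then (1 : ℝ) else -1) / mfil) *
      ((if ai p.1.1 p.1.2 then (1 : ℝ) else 0) * μ p.2 +
        (if bi p.1.1 p.1.2 then (1 : ℝ) else 0) * yi * ξi p.2)

/-- Per-sample Hessian `H_i = ℓ''_i w_i w_iᵀ` of the signal-plus-noise model. -/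
def hessCNN (d mfil : ℕ) (μ ξi : Fin d → ℝ) (yi ℓi : ℝ)
    (ai bi : Bool → Fin mfil → Bool) :
    Matrix ((Bool × Fin mfil) × Fin d) ((Bool × Fin mfil) × Fin d) ℝ :=
  ℓi • vecMulVec (wvec d mfil μ ξi yi ai bi) (wvec d mfil μ ξi yi ai bi)

/-- Mixed Hessian `D_{rf} = C'_r H_r + C'_f H_{n_r+f}` in the CNN model, with the
retain set given by the first `n_r` samples and the forget set by the last `n_f`. -/
def DrfCNN (d mfil nr nf : ℕ) (μ : Fin d → ℝ) (ξ : Fin (nr + nf) → Fin d → ℝ)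
    (y ℓ : Fin (nr + nf) → ℝ) (a b : Fin (nr + nf) → Bool → Fin mfil → Bool)
    (Cr' Cf' : ℝ) (p : Fin nr × Fin nf) :
    Matrix ((Bool × Fin mfil) × Fin d) ((Bool × Fin mfil) × Fin d) ℝ :=
  Cr' • hessCNN d mfil μ (ξ (Fin.castAdd nf p.1)) (y (Fin.castAdd nf p.1))
        (ℓ (Fin.castAdd nf p.1)) (a (Fin.castAdd nf p.1)) (b (Fin.castAdd nf p.1))
    + Cf' • hessCNN d mfil μ (ξ (Fin.natAdd nr p.2)) (y (Fin.natAdd nr p.2))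
        (ℓ (Fin.natAdd nr p.2)) (a (Fin.natAdd nr p.2)) (b (Fin.natAdd nr p.2))

/-- Mix-coherence matrix of the CNN model. -/
def SmatCNN (d mfil nr nf : ℕ) (μ : Fin d → ℝ) (ξ : Fin (nr + nf) → Fin d → ℝ)
    (y ℓ : Fin (nr + nf) → ℝ) (a b : Fin (nr + nf) → Bool → Fin mfil → Bool)
    (Cr' Cf' : ℝ) : Matrix (Fin nr × Fin nf) (Fin nr × Fin nf) ℝ :=
  Matrix.of fun p q =>
    frob (psdSqrt (DrfCNN d mfil nr nf μ ξ y ℓ a b Cr' Cf' p) *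
      psdSqrt (DrfCNN d mfil nr nf μ ξ y ℓ a b Cr' Cf' q))

/-!
Write `S_x = ∑_r x_r H_r` for the sampled batch, `c = η(1-α)/B` and `p = B/n_r`. Since the `H_r`
are symmetric, so is `1 - c S_x`, and its second moment is `1 - 2c E[S_x] + c² E[S_x²]`.
Independence of the selections gives `E[x_r x_s] = p² + δ_{rs}(p - p²)`, hence
`E[S_x] = p ∑ H_r` and `E[S_x²] = p² (∑ H_r)² + (p - p²) ∑ H_r²`; the first two moments
recombine into `(1 - c p ∑ H_r)²`, where `c p ∑ H_r = η(1-α) H_R`, and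
`c²(p - p²) = η²(1-α)²(1/n_r)(1/B - 1/n_r)`.
-/

section Bernoulli

variable {R : Type*} [CommRing R] {ι : Type*} [Fintype ι] {A : Type*} [Ring A] [Algebra R A]

def bernoulliWeight (p : R) (x : ι → Bool) : R :=
  ∏ i, if x i then p else 1 - p

theorem selProb_eq_bernoulliWeight (n B : ℕ) :
    selProb n B = bernoulliWeight ((B : ℝ) / n) := rfl

theorem sum_ite_eq_sum_indicator_smul (x : ι → Bool) (f : ι → A) :
    (∑ i, if x i then f i else 0) = ∑ i, (if x i then (1 : R) else 0) • f i := by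
  refine Finset.sum_congr rfl fun i _ => ?_
  split <;> simp

variable [DecidableEq ι]

theorem sum_bernoulliWeight_mul_prod_indicator (p : R) (T : Finset ι) :
    ∑ x : ι → Bool, bernoulliWeight p x * ∏ i ∈ T, (if x i then 1 else 0) = p ^ T.card := by
  -- both sides factorise over the coordinates
  have factor : ∀ x : ι → Bool, bernoulliWeight p x * ∏ i ∈ T, (if x i then 1 else 0)
      = ∏ i, (if x i then p else 1 - p) * (if i ∈ T then (if x i then 1 else 0) else 1) := by
    intro x
    rw [bernoulliWeight, Finset.prod_mul_distrib, Finset.prod_ite_mem, Finset.univ_inter]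
  have coordinate : ∀ i : ι,
      ∑ b : Bool, (if b then p else 1 - p) * (if i ∈ T then (if b then 1 else 0) else 1)
        = if i ∈ T then p else 1 := by
    intro i
    by_cases hi : i ∈ T <;> simp [hi]
  rw [Finset.sum_congr rfl fun x _ => factor x, ← Fintype.prod_sum
    (fun i (b : Bool) => (if b then p else 1 - p) * (if i ∈ T then (if b then 1 else 0) else 1))]
  simp_rw [coordinate]
  rw [Finset.prod_ite_mem, Finset.univ_inter, Finset.prod_const]

theorem sum_bernoulliWeight (p : R) : ∑ x : ι → Bool, bernoulliWeight p x = 1 := by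
  simpa using sum_bernoulliWeight_mul_prod_indicator p (∅ : Finset ι)

theorem sum_bernoulliWeight_mul_indicator (p : R) (i : ι) :
    ∑ x : ι → Bool, bernoulliWeight p x * (if x i then 1 else 0) = p := by
  simpa using sum_bernoulliWeight_mul_prod_indicator p {i}

theorem sum_bernoulliWeight_mul_indicator_mul_indicator (p : R) (i j : ι) :
    ∑ x : ι → Bool, bernoulliWeight p x * ((if x i then 1 else 0) * (if x j then 1 else 0))
      = p ^ 2 + if i = j then p - p ^ 2 else 0 := by
  by_cases hij : i = j
  · subst hij
    simp only [ite_zero_mul_ite_zero, and_self, mul_one, if_true, sum_bernoulliWeight_mul_indicator]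
    ring
  · simp only [hij, if_false, add_zero]
    rw [← Finset.card_pair hij, ← sum_bernoulliWeight_mul_prod_indicator p {i, j}]
    simp [Finset.prod_pair hij]

theorem sum_bernoulliWeight_smul_sum_ite (p : R) (f : ι → A) :
    ∑ x : ι → Bool, bernoulliWeight p x • (∑ i, if x i then f i else 0) = p • ∑ i, f i := by
  simp_rw [sum_ite_eq_sum_indicator_smul (R := R), Finset.smul_sum, smul_smul]
  rw [Finset.sum_comm]
  simp_rw [← Finset.sum_smul, sum_bernoulliWeight_mul_indicator]

theorem sum_bernoulliWeight_smul_sum_ite_sq (p : R) (f : ι → A) :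
    ∑ x : ι → Bool, bernoulliWeight p x • (∑ i, if x i then f i else 0) ^ 2
      = p ^ 2 • (∑ i, f i) ^ 2 + (p - p ^ 2) • ∑ i, f i ^ 2 := by
  have expand : ∀ x : ι → Bool, (∑ i, if x i then f i else 0) ^ 2
      = ∑ i, ∑ j, ((if x i then (1 : R) else 0) * (if x j then 1 else 0)) • (f i * f j) := by
    intro x
    rw [sum_ite_eq_sum_indicator_smul (R := R), sq, Finset.sum_mul_sum]
    simp_rw [smul_mul_smul]
  simp_rw [expand, Finset.smul_sum, smul_smul]
  rw [Finset.sum_comm]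
  refine (Finset.sum_congr rfl fun i _ => Finset.sum_comm).trans ?_
  simp_rw [← Finset.sum_smul, sum_bernoulliWeight_mul_indicator_mul_indicator, add_smul,
    Finset.sum_add_distrib, ite_smul, zero_smul, Finset.sum_ite_eq, Finset.mem_univ, if_true,
    sq, Finset.sum_mul_sum, Finset.smul_sum]

theorem one_sub_smul_sq (c : R) (a : A) : (1 - c • a) ^ 2 = 1 - (2 * c) • a + c ^ 2 • a ^ 2 := by
  simp only [sq, sub_mul, mul_sub, one_mul, mul_one, smul_mul_smul, two_mul, add_smul]
  abel

theorem sum_bernoulliWeight_smul_one_sub_smul_sum_ite_sq (p c : R) (f : ι → A) :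
    ∑ x : ι → Bool, bernoulliWeight p x • (1 - c • ∑ i, if x i then f i else 0) ^ 2
      = (1 - (c * p) • ∑ i, f i) ^ 2 + (c ^ 2 * (p - p ^ 2)) • ∑ i, f i ^ 2 := by
  simp_rw [one_sub_smul_sq, smul_add, smul_sub, Finset.sum_add_distrib, Finset.sum_sub_distrib,
    smul_comm (bernoulliWeight p _) _, ← Finset.smul_sum, ← Finset.sum_smul, sum_bernoulliWeight,
    sum_bernoulliWeight_smul_sum_ite, sum_bernoulliWeight_smul_sum_ite_sq]
  module

end Bernoulli

theorem stmt9_general (d nr B : ℕ) (hB : 0 < B)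
    (η α : ℝ)
    (HR : Fin nr → Matrix (Fin d) (Fin d) ℝ) (hHR : ∀ r, (HR r).PosSemidef) :
    ∑ x : Fin nr → Bool,
        selProb nr B x •
          (((1 : Matrix (Fin d) (Fin d) ℝ)
              - (η * (1 - α) / B) • ∑ r, if x r then HR r else 0)ᵀ *
            ((1 : Matrix (Fin d) (Fin d) ℝ)
              - (η * (1 - α) / B) • ∑ r, if x r then HR r else 0))
      = ((1 : Matrix (Fin d) (Fin d) ℝ) - (η * (1 - α)) • Hbar HR) ^ 2
        + (η ^ 2 * (1 - α) ^ 2 * (nr : ℝ)⁻¹ * ((B : ℝ)⁻¹ - (nr : ℝ)⁻¹)) •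
            ∑ r, HR r ^ 2 := by
  have hB0 : (B : ℝ) ≠ 0 := by positivity
  have mean : η * (1 - α) / B * (B / nr) = η * (1 - α) * (nr : ℝ)⁻¹ := by
    field_simp
  have variance : (η * (1 - α) / B) ^ 2 * (B / nr - (B / nr : ℝ) ^ 2)
      = η ^ 2 * (1 - α) ^ 2 * (nr : ℝ)⁻¹ * ((B : ℝ)⁻¹ - (nr : ℝ)⁻¹) := by
    rw [show ∀ c q : ℝ, c ^ 2 * (q - q ^ 2) = c * (c * q) - (c * q) ^ 2 by intros; ring, mean]
    ring
  have hsymm : ∀ r, (HR r)ᵀ = HR r := fun r => (isHermitian_iff_isSymm.mp (hHR r).isHermitian).eq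
  have batch_symm : ∀ x : Fin nr → Bool,
      (∑ r, if x r then HR r else 0)ᵀ = ∑ r, if x r then HR r else 0 := by
    intro x
    simp [Matrix.transpose_sum, apply_ite Matrix.transpose, hsymm]
  simp_rw [Matrix.transpose_sub, Matrix.transpose_one, Matrix.transpose_smul, batch_symm, ← sq,
    selProb_eq_bernoulliWeight, sum_bernoulliWeight_smul_one_sub_smul_sum_ite_sq, mean, variance,
    Hbar, smul_smul]

/-- retain-set part of the one-step second moment.
`E[(I − η(1−α)(1/B) Σ_r x_r H_r^R)ᵀ (I − η(1−α)(1/B) Σ_r x_r H_r^R)]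
  = (I − η(1−α)H_R)² + η²(1−α)²(1/n_r)(1/B − 1/n_r) Σ_r (H_r^R)²`. -/
theorem stmt9 (d nr B : ℕ) (hd : 1 ≤ d) (hnr : 1 ≤ nr) (hB : 0 < B) (hBr : B ≤ nr)
    (η α : ℝ) (hη : 0 < η) (hα : α ∈ Set.Icc (0 : ℝ) 1)
    (HR : Fin nr → Matrix (Fin d) (Fin d) ℝ) (hHR : ∀ r, (HR r).PosSemidef) :
    ∑ x : Fin nr → Bool,
        selProb nr B x •
          (((1 : Matrix (Fin d) (Fin d) ℝ)
              - (η * (1 - α) / B) • ∑ r, if x r then HR r else 0)ᵀ *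
            ((1 : Matrix (Fin d) (Fin d) ℝ)
              - (η * (1 - α) / B) • ∑ r, if x r then HR r else 0))
      = ((1 : Matrix (Fin d) (Fin d) ℝ) - (η * (1 - α)) • Hbar HR) ^ 2
        + (η ^ 2 * (1 - α) ^ 2 * (nr : ℝ)⁻¹ * ((B : ℝ)⁻¹ - (nr : ℝ)⁻¹)) •
            ∑ r, HR r ^ 2 :=
  stmt9_general d nr B hB η α HR hHR

end
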